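/- There exists a universal constant C > 0 such that the following holds for every n ≥ 2, every real k* ≥ 0, and every β ∈ (0,1]. Define g(a) = C·((a + k*)·(1 + β·a) + 1/β) and S(G) = sup over real ℓ ≥ 0 of e^{−β·ℓ}·g(k_G + ℓ). Then: (i) for every n-node graph G, S(G) is an upper bound on the local sensitivity of f at G, i.e., S(G) ≥ max over G' node-adjacent to G of |f(G) − f(G')|; and (ii) for every pair of node-adjacent n-node graphs G, G', S(G') ≤ e^β·S(G). -/

import Mathlib

open MeasureTheory Finset
open scoped Classical

noncomputable section

/-- Two `n`-node graphs are node-adjacent if every edge in the symmetric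
difference of their edge sets is incident to a single vertex `i`. -/
def NodeAdjacent {n : ℕ} (G G' : SimpleGraph (Fin n)) : Prop :=
  ∃ i : Fin n, ∀ u v : Fin n, ¬ (G.Adj u v ↔ G'.Adj u v) → u = i ∨ v = i

/-- `G` and `G'` are at node distance at most `c`: there is a path of length `c`
of consecutively node-adjacent graphs from `G` to `G'`. -/
def NodeDistLE {n : ℕ} (G G' : SimpleGraph (Fin n)) (c : ℕ) : Prop :=
  ∃ g : ℕ → SimpleGraph (Fin n), g 0 = G ∧ g c = G' ∧
    ∀ j < c, NodeAdjacent (g j) (g (j + 1))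

/-- `(ε,δ)`-node-differential privacy for a randomized algorithm, viewed as a map
assigning to each graph a (probability) measure on the output space `R`. -/
def NodeDP {n : ℕ} {R : Type*} [MeasurableSpace R]
    (A : SimpleGraph (Fin n) → Measure R) (ε δ : ℝ) : Prop :=
  ∀ G G' : SimpleGraph (Fin n), NodeAdjacent G G' → ∀ S : Set R, MeasurableSet S →
    ((A G) S).toReal ≤ Real.exp ε * ((A G') S).toReal + δ

/-- Number of edges of `G`. -/
def edgeCount {n : ℕ} (G : SimpleGraph (Fin n)) : ℕ := G.edgeSet.ncard

/-- The empirical edge density `p_G = |E| / C(n,2)`. -/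
def edgeDensity {n : ℕ} (G : SimpleGraph (Fin n)) : ℝ :=
  (edgeCount G : ℝ) / (n.choose 2 : ℝ)

/-- Degree of a vertex. -/
def deg {n : ℕ} (G : SimpleGraph (Fin n)) (v : Fin n) : ℕ := (G.neighborSet v).ncard

/-- Average degree `d̄_G = 2|E|/n  ( = (n-1)·p_G )`. -/
def avgDeg {n : ℕ} (G : SimpleGraph (Fin n)) : ℝ := 2 * (edgeCount G : ℝ) / n

/-- `G ∈ 𝒢_{n,k}` : every degree lies in `[d̄ - k, d̄ + k]`. -/
def Concentrated {n : ℕ} (G : SimpleGraph (Fin n)) (k : ℝ) : Prop :=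
  ∀ v : Fin n, |(deg G v : ℝ) - avgDeg G| ≤ k

/-- The number of vertices whose degree lies outside `[d̄_G - k* - 3m, d̄_G + k* + 3m]`. -/
def farCount {n : ℕ} (G : SimpleGraph (Fin n)) (kstar : ℝ) (m : ℕ) : ℕ :=
  {v : Fin n | kstar + 3 * (m : ℝ) < |(deg G v : ℝ) - avgDeg G|}.ncard

/-- `k_G` : the smallest positive integer `m` such that at most `m` vertices have
degree outside `[d̄_G - k* - 3m, d̄_G + k* + 3m]`. -/
def kOf {n : ℕ} (G : SimpleGraph (Fin n)) (kstar : ℝ) : ℕ :=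
  sInf {m : ℕ | 0 < m ∧ farCount G kstar m ≤ m}

/-- `t_v` : the distance from `deg_G(v)` to the interval `I_G`. -/
def tDist {n : ℕ} (G : SimpleGraph (Fin n)) (kstar : ℝ) (v : Fin n) : ℝ :=
  max 0 (|(deg G v : ℝ) - avgDeg G| - (kstar + 3 * (kOf G kstar : ℝ)))

/-- The weight `wt_G(v) = max(0, 1 - β t_v)`. -/
def wt {n : ℕ} (G : SimpleGraph (Fin n)) (kstar β : ℝ) (v : Fin n) : ℝ :=
  max 0 (1 - β * tDist G kstar v)

/-- The value of the pair `{u,v}`: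
`val_G({u,v}) = wt_G({u,v})·x_{uv} + (1 - wt_G({u,v}))·p_G`,
where `wt_G({u,v}) = min(wt_G(u), wt_G(v))`. -/
def valPair {n : ℕ} (G : SimpleGraph (Fin n)) (kstar β : ℝ) (u v : Fin n) : ℝ :=
  min (wt G kstar β u) (wt G kstar β v) * (if G.Adj u v then 1 else 0)
    + (1 - min (wt G kstar β u) (wt G kstar β v)) * edgeDensity G

/-- `f(G)` : the sum of `val_G({u,v})` over unordered pairs of distinct vertices. -/
def fEst {n : ℕ} (G : SimpleGraph (Fin n)) (kstar β : ℝ) : ℝ :=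
  (∑ u : Fin n, ∑ v : Fin n, if u ≠ v then valPair G kstar β u v else 0) / 2

/-- `f_u(G) = Σ_{v ≠ u} val_G({u,v})`. -/
def fVert {n : ℕ} (G : SimpleGraph (Fin n)) (kstar β : ℝ) (u : Fin n) : ℝ :=
  ∑ v ∈ Finset.univ.erase u, valPair G kstar β u v

/-- The smooth upper bound
`S(G) = sup_{ℓ ≥ 0} e^{-βℓ} · C·((k_G+ℓ+k*)(1+β(k_G+ℓ)) + 1/β)`. -/
def smoothS {n : ℕ} (G : SimpleGraph (Fin n)) (kstar β C : ℝ) : ℝ :=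
  ⨆ ℓ : {x : ℝ // 0 ≤ x},
    Real.exp (-β * (ℓ : ℝ)) *
      (C * (((kOf G kstar : ℝ) + (ℓ : ℝ) + kstar) * (1 + β * ((kOf G kstar : ℝ) + (ℓ : ℝ))) + 1 / β))

/-- The Student's t-distribution with 3 degrees of freedom, as a measure on `ℝ`. -/
def studentT3 : Measure ℝ :=
  MeasureTheory.volume.withDensity
    (fun z => ENNReal.ofReal (2 / (Real.sqrt 3 * Real.pi * (1 + z ^ 2 / 3) ^ 2)))

/-- The disjoint union of cliques on `Fin n` given by a block-assignment `π`. -/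
def cliqueUnion {n i : ℕ} (π : Fin n → Fin i) : SimpleGraph (Fin n) where
  Adj u v := u ≠ v ∧ π u = π v
  symm := ⟨fun u v h => ⟨Ne.symm h.1, h.2.symm⟩⟩
  loopless := ⟨fun u h => h.1 rfl⟩

/-!
Write `val_G(u,v) = p_G + W_G(u,v)(x_{uv} - p_G)` with `W_G(u,v) = min(wt_G u, wt_G v)`, and let
`G, G'` differ only at edges through `i`. For `v ≠ i` the degree moves by at most 1, the average
degree by at most 2 and `k_G` by at most 1, so `t_v` moves by at most 6 and `wt(v)` by at most
`6β`.
A pair of vertices other than `i` whose degrees lie in `I_G` and in `I_{G'}` has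
`val_G = val_{G'} = x_{uv}`, and at most `k_G + k_{G'}` vertices are far in `G` or `G'`.
Pairs of two far vertices change by `O(1/n + β)` each. For a far `u`, its pairs with the settled
vertices change by `(wt_G u - wt_{G'} u)·Σ_v (x_{uv} - p_G) + O(1)`, where the sum is
`deg u - d̄ + O(k)` and `|Δwt|·t_u = O(1)` because both weights vanish once `t_u > 1/β + 6`.
The row of `i` is `wt(i)·(deg i - d̄) + O(k)` in each graph, and `wt·t ≤ 1/β`.
Altogether `|f(G) - f(G')| = O((k_G + k*)(1 + βk_G) + 1/β)`, the `ℓ = 0` term of `S(G)`.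
For smoothness, `k_{G'} ≤ k_G + 1` and shifting `ℓ` by one in the supremum costs `e^β`.
-/

lemma Finset.sum_sum_erase_eq_of_symm {α M : Type*} [DecidableEq α] [AddCommMonoid M]
    (s : Finset α) (p : α → Prop) [DecidablePred p] {T : α → α → M}
    (hT : ∀ u v, T u v = T v u) :
    ∑ u ∈ s, ∑ v ∈ s.erase u, T u v
      = ∑ u ∈ s.filter p, ∑ v ∈ (s.filter p).erase u, T u v
        + 2 • ∑ u ∈ s.filter p, ∑ v ∈ s.filter (¬p ·), T u v
        + ∑ u ∈ s.filter (¬p ·), ∑ v ∈ (s.filter (¬p ·)).erase u, T u v := by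
  have hp : ∀ u ∈ s.filter p, ∑ v ∈ s.erase u, T u v
      = ∑ v ∈ (s.filter p).erase u, T u v + ∑ v ∈ s.filter (¬p ·), T u v := by
    intro u hu
    rw [← sum_filter_add_sum_filter_not (s.erase u) p, filter_erase, filter_erase,
      erase_eq_of_notMem (s := s.filter (¬p ·)) (by simp [(mem_filter.1 hu).2])]
  have hnp : ∀ u ∈ s.filter (¬p ·), ∑ v ∈ s.erase u, T u v
      = ∑ v ∈ s.filter p, T u v + ∑ v ∈ (s.filter (¬p ·)).erase u, T u v := by
    intro u hu
    rw [← sum_filter_add_sum_filter_not (s.erase u) p, filter_erase, filter_erase,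
      erase_eq_of_notMem (s := s.filter p) (by simp [(mem_filter.1 hu).2])]
  rw [← sum_filter_add_sum_filter_not s p, sum_congr rfl hp, sum_congr rfl hnp,
    sum_add_distrib, sum_add_distrib, sum_comm (s := s.filter (¬p ·))]
  have hmixed : ∑ v ∈ s.filter p, ∑ u ∈ s.filter (¬p ·), T u v
      = ∑ u ∈ s.filter p, ∑ v ∈ s.filter (¬p ·), T u v :=
    sum_congr rfl fun u _ => sum_congr rfl fun v _ => hT v u
  rw [hmixed, two_nsmul]
  abel

/-- The paper's `x_e` for `e = {u, v}`. -/
def adjInd {n : ℕ} (G : SimpleGraph (Fin n)) (u v : Fin n) : ℝ := if G.Adj u v then 1 else 0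

section Graph

variable {n : ℕ} (G : SimpleGraph (Fin n))

lemma adjInd_comm (u v : Fin n) : adjInd G u v = adjInd G v u := by
  simp only [adjInd, G.adj_comm]

lemma adjInd_nonneg (u v : Fin n) : 0 ≤ adjInd G u v := by
  unfold adjInd; split_ifs <;> norm_num

lemma adjInd_le_one (u v : Fin n) : adjInd G u v ≤ 1 := by
  unfold adjInd; split_ifs <;> norm_num

lemma abs_adjInd_sub_le {a : ℝ} (ha₀ : 0 ≤ a) (ha₁ : a ≤ 1) (u v : Fin n) :
    |adjInd G u v - a| ≤ 1 := by
  unfold adjInd; split_ifs <;> rw [abs_le] <;> constructor <;> linarith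

lemma deg_eq_degree (v : Fin n) : deg G v = G.degree v := by
  rw [deg, Set.ncard_eq_toFinset_card']; rfl

lemma deg_eq_sum_adjInd (v : Fin n) : (deg G v : ℝ) = ∑ u ∈ univ.erase v, adjInd G v u := by
  rw [sum_erase _ (by simp [adjInd]), deg_eq_degree, ← G.card_neighborFinset_eq_degree,
    G.neighborFinset_eq_filter, card_filter]
  push_cast
  rfl

lemma deg_le_sub_one (v : Fin n) : (deg G v : ℝ) ≤ n - 1 := by
  have := G.degree_lt_card_verts v
  rw [Fintype.card_fin] at this
  rw [deg_eq_degree, le_sub_iff_add_le]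
  exact_mod_cast this

lemma edgeCount_eq_card : edgeCount G = #G.edgeFinset := by
  rw [edgeCount, Set.ncard_eq_toFinset_card']
  rfl

lemma sum_deg : ∑ v, (deg G v : ℝ) = 2 * edgeCount G := by
  simp_rw [deg_eq_degree]
  exact_mod_cast (edgeCount_eq_card G ▸ G.sum_degrees_eq_twice_card_edges)

lemma edgeDensity_nonneg : 0 ≤ edgeDensity G := by
  unfold edgeDensity; positivity

lemma edgeDensity_le_one : edgeDensity G ≤ 1 := by
  have h := G.card_edgeFinset_le_card_choose_two
  rw [Fintype.card_fin, ← edgeCount_eq_card] at h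
  exact div_le_one_of_le₀ (by exact_mod_cast h) (Nat.cast_nonneg _)

lemma avgDeg_eq_mul_edgeDensity (hn : 2 ≤ n) : avgDeg G = (n - 1) * edgeDensity G := by
  have : (n : ℝ) - 1 ≠ 0 := by
    have : (2 : ℝ) ≤ n := by exact_mod_cast hn
    linarith
  rw [avgDeg, edgeDensity, Nat.cast_choose_two]
  field_simp

lemma sum_adjInd_sub_edgeDensity (hn : 2 ≤ n) (u : Fin n) :
    ∑ v ∈ univ.erase u, (adjInd G u v - edgeDensity G) = deg G u - avgDeg G := by
  rw [sum_sub_distrib, ← deg_eq_sum_adjInd, sum_const, card_erase_of_mem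
    (mem_univ u), card_univ, Fintype.card_fin, nsmul_eq_mul, avgDeg_eq_mul_edgeDensity G hn,
    Nat.cast_pred (by omega)]

lemma abs_sum_adjInd_sub_edgeDensity_le (hn : 2 ≤ n) {u : Fin n} {S : Finset (Fin n)}
    (hu : u ∉ S) :
    |∑ v ∈ S, (adjInd G u v - edgeDensity G)| ≤ |deg G u - avgDeg G| + #(univ \ S) := by
  have hS : S ⊆ univ.erase u := fun v hv => mem_erase.2 ⟨fun h => hu (h ▸ hv), mem_univ v⟩
  have hrest : |∑ v ∈ univ.erase u \ S, (adjInd G u v - edgeDensity G)| ≤ #(univ \ S) := by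
    refine (abs_sum_le_sum_abs _ _).trans ?_
    refine (sum_le_card_nsmul _ _ 1 fun v _ =>
      abs_adjInd_sub_le G (edgeDensity_nonneg G) (edgeDensity_le_one G) u v).trans ?_
    rw [nsmul_one]
    exact_mod_cast card_le_card (sdiff_subset_sdiff (erase_subset _ _) le_rfl)
  have hsplit : ∑ v ∈ S, (adjInd G u v - edgeDensity G) = (deg G u - avgDeg G)
      - ∑ v ∈ univ.erase u \ S, (adjInd G u v - edgeDensity G) := by
    rw [← sum_adjInd_sub_edgeDensity G hn u, ← sum_sdiff hS]; ring
  rw [hsplit]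
  exact (abs_sub _ _).trans (add_le_add_right hrest _)

lemma card_le_sub_one_of_notMem {S : Finset (Fin n)} {u : Fin n} (hu : u ∉ S) :
    (#S : ℝ) ≤ n - 1 := by
  have hS := card_le_card (fun v hv => mem_erase.2 ⟨fun huv => hu (huv ▸ hv), mem_univ v⟩ :
    S ⊆ univ.erase u)
  rw [card_erase_of_mem (mem_univ u), card_univ, Fintype.card_fin] at hS
  have := u.pos
  rw [le_sub_iff_add_le]
  exact_mod_cast (by omega : #S + 1 ≤ n)

end Graph

section Weight

lemma max_zero_one_sub_mul_le {β : ℝ} (hβ : 0 < β) (t : ℝ) :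
    max 0 (1 - β * t) * t ≤ 1 / β := by
  rcases le_total (1 - β * t) 0 with h | h
  · rw [max_eq_left h, zero_mul]; positivity
  · rw [max_eq_right h, le_div_iff₀ hβ]
    nlinarith [sq_nonneg (β * t - 1 / 2)]

lemma abs_max_zero_one_sub_mul_sub_le {β : ℝ} (hβ : 0 ≤ β) (t t' : ℝ) :
    |max 0 (1 - β * t) - max 0 (1 - β * t')| ≤ β * |t - t'| := by
  rw [max_comm 0, max_comm 0 (1 - β * t')]
  refine (abs_max_sub_max_le_abs _ _ _).trans (le_of_eq ?_)
  rw [show 1 - β * t - (1 - β * t') = β * (t' - t) by ring, abs_mul, abs_of_nonneg hβ,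
    abs_sub_comm]

/-- Either `t ≤ 1/β + c`, or both weights vanish. -/
lemma abs_max_zero_one_sub_mul_sub_mul_le {β c t t' : ℝ} (hβ : 0 < β) (ht : 0 ≤ t)
    (htt' : |t - t'| ≤ c) :
    |max 0 (1 - β * t) - max 0 (1 - β * t')| * t ≤ c + β * c ^ 2 := by
  have hc : 0 ≤ c := (abs_nonneg _).trans htt'
  have hdiff := abs_max_zero_one_sub_mul_sub_le hβ.le t t'
  rcases le_or_gt t (1 / β + c) with hsmall | hlarge
  · calc _ ≤ β * c * (1 / β + c) := by gcongr; exact hdiff.trans (by gcongr)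
      _ = c + β * c ^ 2 := by field_simp
  · have hzero : ∀ s, 1 / β < s → max 0 (1 - β * s) = 0 := fun s hs =>
      max_eq_left (by rw [div_lt_iff₀ hβ] at hs; linarith)
    rw [abs_le] at htt'
    rw [hzero t (by linarith), hzero t' (by linarith), sub_self, abs_zero, zero_mul]
    positivity

variable {n : ℕ} (G : SimpleGraph (Fin n)) (kstar β : ℝ)

lemma tDist_nonneg (v : Fin n) : 0 ≤ tDist G kstar v := le_max_left _ _

lemma abs_deviation_le (v : Fin n) :
    |(deg G v : ℝ) - avgDeg G| ≤ tDist G kstar v + kstar + 3 * kOf G kstar := by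
  have := le_max_right 0 (|(deg G v : ℝ) - avgDeg G| - (kstar + 3 * kOf G kstar))
  rw [← tDist] at this
  linarith

lemma tDist_eq_zero_iff (v : Fin n) :
    tDist G kstar v = 0 ↔ |(deg G v : ℝ) - avgDeg G| ≤ kstar + 3 * kOf G kstar := by
  rw [tDist, max_eq_left_iff, sub_nonpos]

lemma wt_nonneg (v : Fin n) : 0 ≤ wt G kstar β v := le_max_left _ _

lemma wt_le_one {β : ℝ} (hβ : 0 ≤ β) (v : Fin n) : wt G kstar β v ≤ 1 :=
  max_le zero_le_one (by nlinarith [tDist_nonneg G kstar v])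

lemma wt_eq_one {v : Fin n} (hv : tDist G kstar v = 0) : wt G kstar β v = 1 := by
  rw [wt, hv, mul_zero, sub_zero, max_eq_right zero_le_one]

lemma wt_mul_abs_deviation_le {β : ℝ} (hβ : 0 < β) (hkstar : 0 ≤ kstar) (v : Fin n) :
    wt G kstar β v * |(deg G v : ℝ) - avgDeg G| ≤ 1 / β + kstar + 3 * kOf G kstar := by
  have hk : (0 : ℝ) ≤ kstar + 3 * kOf G kstar := by positivity
  calc _ ≤ wt G kstar β v * (tDist G kstar v + (kstar + 3 * kOf G kstar)) := by
        rw [← add_assoc]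
        exact mul_le_mul_of_nonneg_left (abs_deviation_le G kstar v) (wt_nonneg G kstar β v)
    _ ≤ 1 / β + 1 * (kstar + 3 * kOf G kstar) := by
        rw [mul_add]
        exact add_le_add (max_zero_one_sub_mul_le hβ _)
          (mul_le_mul_of_nonneg_right (wt_le_one G kstar hβ.le v) hk)
    _ = _ := by ring

lemma kOf_mem : 0 < kOf G kstar ∧ farCount G kstar (kOf G kstar) ≤ kOf G kstar := by
  refine Nat.sInf_mem (s := {m | 0 < m ∧ farCount G kstar m ≤ m})
    ⟨n + 1, Nat.succ_pos n, ?_⟩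
  calc farCount G kstar (n + 1) ≤ Nat.card (Fin n) := Set.ncard_le_card _
    _ ≤ n + 1 := by simp

/-- The vertices whose degree lies outside `I_G`. -/
def farVerts : Finset (Fin n) := univ.filter fun v => tDist G kstar v ≠ 0

lemma card_farVerts_le : #(farVerts G kstar) ≤ kOf G kstar := by
  refine le_of_eq_of_le ?_ (kOf_mem G kstar).2
  rw [farCount, ← Set.ncard_coe_finset, farVerts, coe_filter]
  congr 1
  ext v
  simp [tDist_eq_zero_iff]

end Weight

section FarVerts

variable {n : ℕ} (G G' : SimpleGraph (Fin n)) (kstar : ℝ) (i : Fin n)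

lemma tDist_eq_zero_of_mem_filter_not_far {v : Fin n}
    (hv : v ∈ (univ.erase i).filter (· ∉ farVerts G kstar ∪ farVerts G' kstar)) :
    v ≠ i ∧ tDist G kstar v = 0 ∧ tDist G' kstar v = 0 := by
  simpa [farVerts] using hv

lemma card_filter_far_le :
    #((univ.erase i).filter (· ∈ farVerts G kstar ∪ farVerts G' kstar))
      ≤ kOf G kstar + kOf G' kstar :=
  (card_le_card fun _ hv => (mem_filter.1 hv).2).trans
    ((card_union_le _ _).trans (add_le_add (card_farVerts_le G kstar) (card_farVerts_le G' kstar)))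

lemma card_sdiff_filter_not_far_le :
    #(univ \ (univ.erase i).filter (· ∉ farVerts G kstar ∪ farVerts G' kstar))
      ≤ kOf G kstar + kOf G' kstar + 1 := by
  have hsub : univ \ (univ.erase i).filter (· ∉ farVerts G kstar ∪ farVerts G' kstar)
      ⊆ insert i (farVerts G kstar ∪ farVerts G' kstar) := by
    intro v
    simp only [mem_sdiff, mem_univ, mem_filter, mem_erase, true_and, mem_insert]
    tauto
  refine (card_le_card hsub).trans ((card_insert_le _ _).trans ?_)
  have := (card_union_le (farVerts G kstar) (farVerts G' kstar)).trans
    (add_le_add (card_farVerts_le G kstar) (card_farVerts_le G' kstar))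
  omega

end FarVerts

section Value

variable {n : ℕ} (G : SimpleGraph (Fin n)) (kstar : ℝ) {β : ℝ}

lemma valPair_eq (u v : Fin n) : valPair G kstar β u v
    = edgeDensity G + min (wt G kstar β u) (wt G kstar β v) * (adjInd G u v - edgeDensity G) := by
  rw [valPair, adjInd]; ring

lemma valPair_comm (u v : Fin n) : valPair G kstar β u v = valPair G kstar β v u := by
  rw [valPair_eq, valPair_eq, min_comm, adjInd_comm]

lemma valPair_mem_Icc (hβ : 0 ≤ β) (u v : Fin n) : valPair G kstar β u v ∈ Set.Icc 0 1 := by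
  have hW₀ : 0 ≤ min (wt G kstar β u) (wt G kstar β v) :=
    le_min (wt_nonneg G kstar β u) (wt_nonneg G kstar β v)
  have hW₁ : min (wt G kstar β u) (wt G kstar β v) ≤ 1 :=
    (min_le_left _ _).trans (wt_le_one G kstar hβ u)
  have hp₀ := edgeDensity_nonneg G
  have hp₁ := edgeDensity_le_one G
  rw [valPair]
  constructor <;> split_ifs <;> nlinarith

lemma abs_valPair_sub_valPair_le_one (G' : SimpleGraph (Fin n)) (hβ : 0 ≤ β) (u v : Fin n) :
    |valPair G kstar β u v - valPair G' kstar β u v| ≤ 1 := by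
  obtain ⟨h₀, h₁⟩ := valPair_mem_Icc G kstar hβ u v
  obtain ⟨h₀', h₁'⟩ := valPair_mem_Icc G' kstar hβ u v
  rw [abs_sub_le_iff]; constructor <;> linarith

lemma fEst_eq_sum_erase :
    fEst G kstar β = (∑ u, ∑ v ∈ univ.erase u, valPair G kstar β u v) / 2 := by
  rw [fEst]
  congr 1
  refine sum_congr rfl fun u _ => ?_
  rw [← filter_ne' univ u, sum_filter]
  exact sum_congr rfl fun v _ => if_congr ne_comm rfl rfl

lemma sum_valPair_of_tDist_eq_zero (hβ : 0 ≤ β) {S : Finset (Fin n)}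
    (hS : ∀ v ∈ S, tDist G kstar v = 0) (u : Fin n) :
    ∑ v ∈ S, valPair G kstar β u v
      = #S * edgeDensity G + wt G kstar β u * ∑ v ∈ S, (adjInd G u v - edgeDensity G) := by
  rw [mul_sum, ← nsmul_eq_mul, ← sum_const, ← sum_add_distrib]
  refine sum_congr rfl fun v hv => ?_
  rw [valPair_eq, wt_eq_one G kstar β (hS v hv), min_eq_left (wt_le_one G kstar hβ u)]

lemma abs_wt_mul_sum_adjInd_sub_le (hn : 2 ≤ n) (hβ : 0 < β) (hkstar : 0 ≤ kstar) {u : Fin n}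
    {S : Finset (Fin n)} (hu : u ∉ S) :
    |wt G kstar β u * ∑ v ∈ S, (adjInd G u v - edgeDensity G)|
      ≤ 1 / β + kstar + 3 * kOf G kstar + #(univ \ S) := by
  have hw₀ := wt_nonneg G kstar β u
  rw [abs_mul, abs_of_nonneg hw₀]
  calc _ ≤ wt G kstar β u * (|(deg G u : ℝ) - avgDeg G| + #(univ \ S)) :=
        mul_le_mul_of_nonneg_left (abs_sum_adjInd_sub_edgeDensity_le G hn hu) hw₀
    _ ≤ (1 / β + kstar + 3 * kOf G kstar) + 1 * #(univ \ S) := by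
        rw [mul_add]
        exact add_le_add (wt_mul_abs_deviation_le G kstar hβ hkstar u)
          (mul_le_mul_of_nonneg_right (wt_le_one G kstar hβ.le u) (Nat.cast_nonneg _))
    _ = _ := by ring

end Value

def AgreeAwayFrom {n : ℕ} (G G' : SimpleGraph (Fin n)) (i : Fin n) : Prop :=
  ∀ u v, u ≠ i → v ≠ i → (G.Adj u v ↔ G'.Adj u v)

lemma NodeAdjacent.exists_agreeAwayFrom {n : ℕ} {G G' : SimpleGraph (Fin n)}
    (h : NodeAdjacent G G') : ∃ i, AgreeAwayFrom G G' i := by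
  obtain ⟨i, hi⟩ := h
  exact ⟨i, fun u v hu hv => by_contra fun huv => (hi u v huv).elim hu hv⟩

namespace AgreeAwayFrom

variable {n : ℕ} {G G' : SimpleGraph (Fin n)} {i : Fin n} (h : AgreeAwayFrom G G' i) (kstar : ℝ)
  {β : ℝ}
include h

lemma symm : AgreeAwayFrom G' G i := fun u v hu hv => (h u v hu hv).symm

lemma adjInd_eq {u v : Fin n} (hu : u ≠ i) (hv : v ≠ i) : adjInd G u v = adjInd G' u v := by
  simp only [adjInd, h u v hu hv]

lemma deg_sub_deg {v : Fin n} (hv : v ≠ i) :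
    (deg G v : ℝ) - deg G' v = adjInd G v i - adjInd G' v i := by
  rw [deg_eq_sum_adjInd, deg_eq_sum_adjInd, ← sum_sub_distrib]
  refine sum_eq_single_of_mem i (mem_erase.2 ⟨Ne.symm hv, mem_univ i⟩) fun u _ hu => ?_
  rw [h.adjInd_eq hv hu, sub_self]

lemma abs_deg_sub_le {v : Fin n} (hv : v ≠ i) : |(deg G v : ℝ) - deg G' v| ≤ 1 := by
  rw [h.deg_sub_deg hv]
  exact abs_adjInd_sub_le G (adjInd_nonneg G' v i) (adjInd_le_one G' v i) v i

lemma edgeCount_sub_edgeCount :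
    (edgeCount G : ℝ) - edgeCount G' = deg G i - deg G' i := by
  have hrow : ∑ v ∈ univ.erase i, ((deg G v : ℝ) - deg G' v) = deg G i - deg G' i := by
    rw [deg_eq_sum_adjInd G i, deg_eq_sum_adjInd G' i, ← sum_sub_distrib]
    refine sum_congr rfl fun v hv => ?_
    rw [h.deg_sub_deg (ne_of_mem_erase hv), adjInd_comm G, adjInd_comm G']
  have htwice : 2 * ((edgeCount G : ℝ) - edgeCount G') = 2 * (deg G i - deg G' i) := by
    rw [mul_sub, ← sum_deg, ← sum_deg, ← sum_sub_distrib,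
      ← add_sum_erase _ _ (mem_univ i), hrow]
    ring
  linarith

lemma abs_avgDeg_sub_le : |avgDeg G - avgDeg G'| ≤ 2 := by
  have hn : (0 : ℝ) < n := by exact_mod_cast i.pos
  have hdeg : |(deg G i : ℝ) - deg G' i| ≤ n - 1 := by
    rw [abs_sub_le_iff]
    constructor <;> linarith [deg_le_sub_one G i, deg_le_sub_one G' i,
      (Nat.cast_nonneg (deg G i) : (0 : ℝ) ≤ _), (Nat.cast_nonneg (deg G' i) : (0 : ℝ) ≤ _)]
  rw [avgDeg, avgDeg, ← sub_div, ← mul_sub, h.edgeCount_sub_edgeCount, abs_div, abs_mul,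
    abs_two, abs_of_pos hn, div_le_iff₀ hn]
  linarith

lemma mul_abs_edgeDensity_sub_le (hn : 2 ≤ n) :
    (n - 1) * |edgeDensity G - edgeDensity G'| ≤ 2 := by
  have : (0 : ℝ) ≤ n - 1 := by
    have : (2 : ℝ) ≤ n := by exact_mod_cast hn
    linarith
  rw [← abs_of_nonneg this, ← abs_mul, mul_sub, ← avgDeg_eq_mul_edgeDensity G hn,
    ← avgDeg_eq_mul_edgeDensity G' hn]
  exact h.abs_avgDeg_sub_le

lemma abs_abs_deviation_sub_le {v : Fin n} (hv : v ≠ i) :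
    |(|(deg G v : ℝ) - avgDeg G|) - (|(deg G' v : ℝ) - avgDeg G'|)| ≤ 3 := by
  refine (abs_abs_sub_abs_le_abs_sub _ _).trans ?_
  rw [show (deg G v : ℝ) - avgDeg G - (deg G' v - avgDeg G')
    = (deg G v - deg G' v) - (avgDeg G - avgDeg G') by ring]
  linarith [abs_sub (deg G v - deg G' v : ℝ) (avgDeg G - avgDeg G'), h.abs_deg_sub_le hv,
    h.abs_avgDeg_sub_le]

lemma kOf_le_kOf_add_one : kOf G' kstar ≤ kOf G kstar + 1 := by
  set k := kOf G kstar
  refine Nat.sInf_le ⟨k.succ_pos, ?_⟩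
  have hsub : {v | kstar + 3 * ((k + 1 : ℕ) : ℝ) < |(deg G' v : ℝ) - avgDeg G'|}
      ⊆ insert i {v | kstar + 3 * (k : ℝ) < |(deg G v : ℝ) - avgDeg G|} := by
    intro v hv
    rcases eq_or_ne v i with rfl | hvi
    · exact Set.mem_insert _ _
    · refine Set.mem_insert_of_mem _ ?_
      have := abs_le.1 (h.abs_abs_deviation_sub_le hvi)
      simp only [Set.mem_ofPred_eq, Nat.cast_add, Nat.cast_one] at hv ⊢
      linarith
  calc farCount G' kstar (k + 1)
        ≤ (insert i {v | kstar + 3 * (k : ℝ) < |(deg G v : ℝ) - avgDeg G|}).ncard :=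
        Set.ncard_le_ncard hsub
    _ ≤ farCount G kstar k + 1 := Set.ncard_insert_le _ _
    _ ≤ k + 1 := Nat.add_le_add_right (kOf_mem G kstar).2 1

lemma abs_tDist_sub_le {v : Fin n} (hv : v ≠ i) :
    |tDist G kstar v - tDist G' kstar v| ≤ 6 := by
  have hk : (kOf G' kstar : ℝ) ≤ kOf G kstar + 1 := by exact_mod_cast h.kOf_le_kOf_add_one kstar
  have hk' : (kOf G kstar : ℝ) ≤ kOf G' kstar + 1 := by
    exact_mod_cast h.symm.kOf_le_kOf_add_one kstar
  have hkR : |(kOf G kstar : ℝ) - kOf G' kstar| ≤ 1 :=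
    abs_sub_le_iff.2 ⟨by linarith, by linarith⟩
  rw [tDist, tDist, max_comm 0, max_comm 0 (_ - _)]
  refine (abs_max_sub_max_le_abs _ _ _).trans ?_
  rw [show |(deg G v : ℝ) - avgDeg G| - (kstar + 3 * kOf G kstar)
      - (|(deg G' v : ℝ) - avgDeg G'| - (kstar + 3 * kOf G' kstar))
    = (|(deg G v : ℝ) - avgDeg G| - |(deg G' v : ℝ) - avgDeg G'|)
      - 3 * ((kOf G kstar : ℝ) - kOf G' kstar) by ring]
  refine (abs_sub _ _).trans ?_
  rw [abs_mul, abs_of_pos (by norm_num : (0 : ℝ) < 3)]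
  linarith [h.abs_abs_deviation_sub_le hv]

lemma abs_wt_sub_le (hβ : 0 ≤ β) {v : Fin n} (hv : v ≠ i) :
    |wt G kstar β v - wt G' kstar β v| ≤ 6 * β := by
  refine (abs_max_zero_one_sub_mul_sub_le hβ _ _).trans ?_
  linarith [mul_le_mul_of_nonneg_left (h.abs_tDist_sub_le kstar hv) hβ]

lemma abs_wt_sub_mul_tDist_le (hβ : 0 < β) {v : Fin n} (hv : v ≠ i) :
    |wt G kstar β v - wt G' kstar β v| * tDist G kstar v ≤ 6 + 36 * β := by
  have := abs_max_zero_one_sub_mul_sub_mul_le hβ (tDist_nonneg G kstar v)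
    (h.abs_tDist_sub_le kstar hv)
  rw [wt, wt]
  linarith

lemma valPair_sub_valPair_eq_zero {u v : Fin n} (hu : u ≠ i) (hv : v ≠ i)
    (hGu : tDist G kstar u = 0) (hG'u : tDist G' kstar u = 0)
    (hGv : tDist G kstar v = 0) (hG'v : tDist G' kstar v = 0) :
    valPair G kstar β u v - valPair G' kstar β u v = 0 := by
  rw [valPair_eq, valPair_eq, wt_eq_one G kstar β hGu, wt_eq_one G kstar β hGv,
    wt_eq_one G' kstar β hG'u, wt_eq_one G' kstar β hG'v, h.adjInd_eq hu hv, min_self]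
  ring

lemma abs_valPair_sub_le (hβ : 0 ≤ β) {u v : Fin n} (hu : u ≠ i) (hv : v ≠ i) :
    |valPair G kstar β u v - valPair G' kstar β u v|
      ≤ |edgeDensity G - edgeDensity G'| + 6 * β := by
  set W := min (wt G kstar β u) (wt G kstar β v)
  set W' := min (wt G' kstar β u) (wt G' kstar β v)
  have hW : |W - W'| ≤ 6 * β := (abs_min_sub_min_le_max _ _ _ _).trans
    (max_le (h.abs_wt_sub_le kstar hβ hu) (h.abs_wt_sub_le kstar hβ hv))
  have hW' : |1 - W'| ≤ 1 := by
    have := wt_le_one G' kstar hβ u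
    rw [abs_le]; constructor <;>
      linarith [min_le_left (wt G' kstar β u) (wt G' kstar β v),
        le_min (wt_nonneg G' kstar β u) (wt_nonneg G' kstar β v)]
  have hx := abs_adjInd_sub_le G (edgeDensity_nonneg G) (edgeDensity_le_one G) u v
  rw [valPair_eq, valPair_eq, ← h.adjInd_eq hu hv, show ∀ p p' x : ℝ, p + W * (x - p)
      - (p' + W' * (x - p')) = (p - p') * (1 - W') + (W - W') * (x - p) by intros; ring]
  refine (abs_add_le _ _).trans ?_
  rw [abs_mul, abs_mul]
  exact add_le_add (mul_le_of_le_one_right (abs_nonneg _) hW')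
    ((mul_le_of_le_one_right (abs_nonneg _) hx).trans hW)

lemma abs_sum_valPair_sub_le_of_ne (hn : 2 ≤ n) (hβ : 0 < β) (hkstar : 0 ≤ kstar) {u : Fin n}
    (hu : u ≠ i) {S : Finset (Fin n)} (huS : u ∉ S)
    (hS : ∀ v ∈ S, v ≠ i ∧ tDist G kstar v = 0 ∧ tDist G' kstar v = 0) :
    |∑ v ∈ S, (valPair G kstar β u v - valPair G' kstar β u v)|
      ≤ 8 + 36 * β + 6 * β * (kstar + 3 * kOf G kstar + #(univ \ S)) := by
  have hn' : (2 : ℝ) ≤ n := by exact_mod_cast hn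
  set p := edgeDensity G
  set p' := edgeDensity G'
  set w := wt G kstar β u
  set w' := wt G' kstar β u
  set σ := ∑ v ∈ S, (adjInd G u v - p)
  set R : ℝ := kstar + 3 * kOf G kstar + #(univ \ S)
  have hσ' : ∑ v ∈ S, (adjInd G' u v - p') = σ + #S * (p - p') := by
    rw [← nsmul_eq_mul, ← sum_const, ← sum_add_distrib]
    exact sum_congr rfl fun v hv => by rw [← h.adjInd_eq hu (hS v hv).1]; ring
  rw [sum_sub_distrib, sum_valPair_of_tDist_eq_zero G kstar hβ.le (fun v hv => (hS v hv).2.1),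
    sum_valPair_of_tDist_eq_zero G' kstar hβ.le (fun v hv => (hS v hv).2.2), hσ',
    show #S * p + w * σ - (#S * p' + w' * (σ + #S * (p - p')))
      = #S * (p - p') * (1 - w') + (w - w') * σ by ring]
  have hdensity : |#S * (p - p') * (1 - w')| ≤ 2 := by
    have hw' : |1 - w'| ≤ 1 := abs_le.2 ⟨by linarith [wt_le_one G' kstar hβ.le u],
      by linarith [wt_nonneg G' kstar β u]⟩
    rw [abs_mul, abs_mul, Nat.abs_cast]
    calc _ ≤ (n - 1) * |p - p'| * 1 := mul_le_mul (mul_le_mul_of_nonneg_right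
          (card_le_sub_one_of_notMem huS) (abs_nonneg _)) hw' (abs_nonneg _)
          (mul_nonneg (by linarith) (abs_nonneg _))
      _ ≤ 2 := by linarith [h.mul_abs_edgeDensity_sub_le hn]
  have hweight : |(w - w') * σ| ≤ 6 + 36 * β + 6 * β * R := by
    have hσ : |σ| ≤ tDist G kstar u + R := by
      have := abs_sum_adjInd_sub_edgeDensity_le G hn huS
      linarith [abs_deviation_le G kstar u]
    have hR : 0 ≤ R := by positivity
    rw [abs_mul]
    calc _ ≤ |w - w'| * (tDist G kstar u + R) := mul_le_mul_of_nonneg_left hσ (abs_nonneg _)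
      _ = |w - w'| * tDist G kstar u + |w - w'| * R := mul_add _ _ _
      _ ≤ 6 + 36 * β + 6 * β * R := add_le_add (h.abs_wt_sub_mul_tDist_le kstar hβ hu)
          (mul_le_mul_of_nonneg_right (h.abs_wt_sub_le kstar hβ.le hu) hR)
  linarith [abs_add_le (#S * (p - p') * (1 - w')) ((w - w') * σ)]

lemma abs_sum_valPair_sub_le_of_eq (hn : 2 ≤ n) (hβ : 0 < β) (hkstar : 0 ≤ kstar)
    {S : Finset (Fin n)} (hiS : i ∉ S)
    (hS : ∀ v ∈ S, tDist G kstar v = 0 ∧ tDist G' kstar v = 0) :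
    |∑ v ∈ S, (valPair G kstar β i v - valPair G' kstar β i v)|
      ≤ 2 + 2 / β + 2 * kstar + 3 * kOf G kstar + 3 * kOf G' kstar + 2 * #(univ \ S) := by
  rw [sum_sub_distrib, sum_valPair_of_tDist_eq_zero G kstar hβ.le (fun v hv => (hS v hv).1),
    sum_valPair_of_tDist_eq_zero G' kstar hβ.le (fun v hv => (hS v hv).2),
    show ∀ a b c d e : ℝ, a * b + c - (a * d + e) = a * (b - d) + (c - e) by intros; ring]
  have hdensity : |#S * (edgeDensity G - edgeDensity G')| ≤ 2 := by
    rw [abs_mul, Nat.abs_cast]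
    calc _ ≤ (n - 1) * |edgeDensity G - edgeDensity G'| := by
          gcongr
          exact card_le_sub_one_of_notMem hiS
      _ ≤ 2 := h.mul_abs_edgeDensity_sub_le hn
  have hG := abs_wt_mul_sum_adjInd_sub_le G kstar hn hβ hkstar hiS
  have hG' := abs_wt_mul_sum_adjInd_sub_le G' kstar hn hβ hkstar hiS
  have hβ2 : 2 / β = 1 / β + 1 / β := by ring
  linarith [abs_add_le (#S * (edgeDensity G - edgeDensity G'))
      (wt G kstar β i * ∑ v ∈ S, (adjInd G i v - edgeDensity G)
        - wt G' kstar β i * ∑ v ∈ S, (adjInd G' i v - edgeDensity G')),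
    abs_sub (wt G kstar β i * ∑ v ∈ S, (adjInd G i v - edgeDensity G))
      (wt G' kstar β i * ∑ v ∈ S, (adjInd G' i v - edgeDensity G')),
    abs_wt_mul_sum_adjInd_sub_le G kstar hn hβ hkstar hiS,
    abs_wt_mul_sum_adjInd_sub_le G' kstar hn hβ hkstar hiS]

lemma abs_sum_sum_valPair_sub_le_of_forall_ne (hn : 2 ≤ n) (hβ : 0 ≤ β) {B : Finset (Fin n)}
    (hiB : i ∉ B) :
    |∑ u ∈ B, ∑ v ∈ B.erase u, (valPair G kstar β u v - valPair G' kstar β u v)|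
      ≤ 2 * #B + 6 * β * #B ^ 2 := by
  have hne : ∀ v ∈ B, v ≠ i := fun v hv hvi => hiB (hvi ▸ hv)
  set c := |edgeDensity G - edgeDensity G'| + 6 * β
  have hrow : ∀ u ∈ B, |∑ v ∈ B.erase u, (valPair G kstar β u v - valPair G' kstar β u v)|
      ≤ #B * c := fun u hu => by
    refine (abs_sum_le_sum_abs _ _).trans ((sum_le_card_nsmul _ _ c fun v hv =>
      h.abs_valPair_sub_le kstar hβ (hne u hu) (hne v (mem_of_mem_erase hv))).trans ?_)
    rw [nsmul_eq_mul]
    exact mul_le_mul_of_nonneg_right (by exact_mod_cast card_erase_le) (by positivity)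
  calc _ ≤ #B * (#B * c) := (abs_sum_le_sum_abs _ _).trans
        ((sum_le_card_nsmul _ _ _ hrow).trans (by rw [nsmul_eq_mul]))
    _ = #B * (#B * |edgeDensity G - edgeDensity G'|) + 6 * β * #B ^ 2 := by ring
    _ ≤ #B * ((n - 1) * |edgeDensity G - edgeDensity G'|) + 6 * β * #B ^ 2 := by
        gcongr
        exact card_le_sub_one_of_notMem hiB
    _ ≤ #B * 2 + 6 * β * #B ^ 2 := by
        gcongr
        exact h.mul_abs_edgeDensity_sub_le hn
    _ = 2 * #B + 6 * β * #B ^ 2 := by ring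

lemma abs_sum_sum_valPair_sub_le_of_settled (hn : 2 ≤ n) (hβ : 0 < β) (hkstar : 0 ≤ kstar)
    {B S : Finset (Fin n)} (hiB : i ∉ B) (hBS : Disjoint B S)
    (hS : ∀ v ∈ S, v ≠ i ∧ tDist G kstar v = 0 ∧ tDist G' kstar v = 0) :
    |∑ u ∈ B, ∑ v ∈ S, (valPair G kstar β u v - valPair G' kstar β u v)|
      ≤ #B * (8 + 36 * β + 6 * β * (kstar + 3 * kOf G kstar + #(univ \ S))) := by
  refine (abs_sum_le_sum_abs _ _).trans ((sum_le_card_nsmul _ _ _ fun u hu => ?_).trans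
    (nsmul_eq_mul _ _).le)
  exact h.abs_sum_valPair_sub_le_of_ne kstar hn hβ hkstar (fun hui => hiB (hui ▸ hu))
    (disjoint_left.1 hBS hu) hS

/-- Between vertices other than `i` whose degrees lie in both intervals, `val_G = val_{G'}`;
so only pairs meeting a far vertex contribute. -/
lemma abs_sum_sum_erase_valPair_sub_le (hn : 2 ≤ n) (hβ : 0 < β) (hkstar : 0 ≤ kstar) :
    |∑ u ∈ univ.erase i, ∑ v ∈ (univ.erase i).erase u,
        (valPair G kstar β u v - valPair G' kstar β u v)|
      ≤ 2 * (kOf G kstar + kOf G' kstar) + 6 * β * (kOf G kstar + kOf G' kstar) ^ 2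
        + 2 * ((kOf G kstar + kOf G' kstar) * (8 + 36 * β
          + 6 * β * (kstar + 3 * kOf G kstar + (kOf G kstar + kOf G' kstar + 1)))) := by
  set F := farVerts G kstar ∪ farVerts G' kstar
  set B := (univ.erase i).filter (· ∈ F)
  set S := (univ.erase i).filter (· ∉ F)
  have hiB : i ∉ B := fun hi => (mem_erase.1 (mem_filter.1 hi).1).1 rfl
  have hS : ∀ v ∈ S, v ≠ i ∧ tDist G kstar v = 0 ∧ tDist G' kstar v = 0 := fun v hv =>
    tDist_eq_zero_of_mem_filter_not_far G G' kstar i hv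
  have hB : (#B : ℝ) ≤ kOf G kstar + kOf G' kstar := by
    exact_mod_cast card_filter_far_le G G' kstar i
  have hSc : (#(univ \ S) : ℝ) ≤ kOf G kstar + kOf G' kstar + 1 := by
    exact_mod_cast card_sdiff_filter_not_far_le G G' kstar i
  rw [sum_sum_erase_eq_of_symm _ (· ∈ F) fun u v => by rw [valPair_comm G, valPair_comm G'],
    sum_eq_zero (s := S) fun u hu => sum_eq_zero fun v hv =>
      h.valPair_sub_valPair_eq_zero kstar (hS u hu).1 (hS v (mem_of_mem_erase hv)).1
        (hS u hu).2.1 (hS u hu).2.2 (hS v (mem_of_mem_erase hv)).2.1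
        (hS v (mem_of_mem_erase hv)).2.2, add_zero, nsmul_eq_mul, Nat.cast_two]
  refine (abs_add_le _ _).trans ?_
  rw [abs_mul, abs_two]
  have hbad := h.abs_sum_sum_valPair_sub_le_of_forall_ne kstar hn hβ.le hiB
  have hmixed := h.abs_sum_sum_valPair_sub_le_of_settled kstar hn hβ hkstar hiB
    (disjoint_filter_filter_not _ _ _) hS
  have h3k : (0 : ℝ) ≤ 8 + 36 * β + 6 * β * (kstar + 3 * kOf G kstar + #(univ \ S)) := by
    positivity
  calc _ ≤ 2 * #B + 6 * β * #B ^ 2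
        + 2 * (#B * (8 + 36 * β + 6 * β * (kstar + 3 * kOf G kstar + #(univ \ S)))) := by
        linarith
    _ ≤ _ := by gcongr

lemma abs_sum_valPair_sub_le (hn : 2 ≤ n) (hβ : 0 < β) (hkstar : 0 ≤ kstar) :
    |∑ v ∈ univ.erase i, (valPair G kstar β i v - valPair G' kstar β i v)|
      ≤ (kOf G kstar + kOf G' kstar) + (2 + 2 / β + 2 * kstar + 3 * kOf G kstar
        + 3 * kOf G' kstar + 2 * (kOf G kstar + kOf G' kstar + 1)) := by
  set F := farVerts G kstar ∪ farVerts G' kstar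
  have hS := fun v (hv : v ∈ (univ.erase i).filter (· ∉ F)) =>
    tDist_eq_zero_of_mem_filter_not_far G G' kstar i hv
  have hB : (#((univ.erase i).filter (· ∈ F)) : ℝ) ≤ kOf G kstar + kOf G' kstar := by
    exact_mod_cast card_filter_far_le G G' kstar i
  have hSc :
      (#(univ \ (univ.erase i).filter (· ∉ F)) : ℝ) ≤ kOf G kstar + kOf G' kstar + 1 := by
    exact_mod_cast card_sdiff_filter_not_far_le G G' kstar i
  rw [← sum_filter_add_sum_filter_not _ (· ∈ F)]
  refine (abs_add_le _ _).trans (add_le_add ?_ ?_)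
  · refine (abs_sum_le_sum_abs _ _).trans ((sum_le_card_nsmul _ _ 1 fun v _ =>
      abs_valPair_sub_valPair_le_one G kstar G' hβ.le i v).trans ?_)
    rwa [nsmul_one]
  · refine (h.abs_sum_valPair_sub_le_of_eq kstar hn hβ hkstar
      (fun hi => (mem_erase.1 (mem_filter.1 hi).1).1 rfl)
      fun v hv => (hS v hv).2).trans ?_
    linarith

lemma abs_fEst_sub_le (hn : 2 ≤ n) (hβ : 0 < β) (hkstar : 0 ≤ kstar) :
    |fEst G kstar β - fEst G' kstar β|
      ≤ (kOf G kstar + kOf G' kstar) + (2 + 2 / β + 2 * kstar + 3 * kOf G kstar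
          + 3 * kOf G' kstar + 2 * (kOf G kstar + kOf G' kstar + 1))
        + ((kOf G kstar + kOf G' kstar) + 3 * β * (kOf G kstar + kOf G' kstar) ^ 2
          + (kOf G kstar + kOf G' kstar) * (8 + 36 * β
            + 6 * β * (kstar + 3 * kOf G kstar + (kOf G kstar + kOf G' kstar + 1)))) := by
  rw [fEst_eq_sum_erase, fEst_eq_sum_erase, ← sub_div, ← sum_sub_distrib]
  simp_rw [← sum_sub_distrib]
  rw [sum_sum_erase_eq_of_symm _ (· = i) fun u v => by rw [valPair_comm G, valPair_comm G']]
  simp only [filter_eq', filter_ne', mem_univ, if_true, erase_singleton, sum_empty,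
    sum_singleton, zero_add, nsmul_eq_mul, Nat.cast_two]
  rw [abs_div, abs_two, div_le_iff₀ two_pos]
  have hrow := h.abs_sum_valPair_sub_le kstar hn hβ hkstar
  have hblock := h.abs_sum_sum_erase_valPair_sub_le kstar hn hβ hkstar
  refine (abs_add_le _ _).trans ?_
  rw [abs_mul, abs_two]
  linarith

end AgreeAwayFrom

/-- The function `g` of the statement. -/
def sensBound (kstar β C a : ℝ) : ℝ := C * ((a + kstar) * (1 + β * a) + 1 / β)

def smoothSup (g : ℝ → ℝ) (β a : ℝ) : ℝ :=
  ⨆ ℓ : {x : ℝ // 0 ≤ x}, Real.exp (-β * ℓ) * g (a + ℓ)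

lemma smoothS_eq_smoothSup {n : ℕ} (G : SimpleGraph (Fin n)) (kstar β C : ℝ) :
    smoothS G kstar β C = smoothSup (sensBound kstar β C) β (kOf G kstar) := rfl

section SmoothSup

variable {g : ℝ → ℝ} {β a : ℝ}

lemma le_smoothSup
    (hg : BddAbove (Set.range fun ℓ : {x : ℝ // 0 ≤ x} =>
      Real.exp (-β * ℓ) * g (a + ℓ))) :
    g a ≤ smoothSup g β a := by
  simpa [smoothSup] using le_ciSup hg ⟨0, le_rfl⟩

lemma smoothSup_le_exp_mul_smoothSup (hg : MonotoneOn g (Set.Ici 0)) {a' : ℝ} (ha' : 0 ≤ a')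
    (ha'a : a' ≤ a + 1)
    (hbdd : BddAbove (Set.range fun ℓ : {x : ℝ // 0 ≤ x} =>
      Real.exp (-β * ℓ) * g (a + ℓ))) :
    smoothSup g β a' ≤ Real.exp β * smoothSup g β a := by
  have : Nonempty {x : ℝ // 0 ≤ x} := ⟨⟨0, le_rfl⟩⟩
  refine ciSup_le fun ⟨ℓ, hℓ⟩ => ?_
  calc Real.exp (-β * ℓ) * g (a' + ℓ) ≤ Real.exp (-β * ℓ) * g (a + (ℓ + 1)) :=
        mul_le_mul_of_nonneg_left (hg (Set.mem_Ici.2 (by linarith))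
          (Set.mem_Ici.2 (by linarith)) (by linarith)) (Real.exp_pos _).le
    _ = Real.exp β * (Real.exp (-β * (ℓ + 1)) * g (a + (ℓ + 1))) := by
        rw [← mul_assoc, ← Real.exp_add]; ring_nf
    _ ≤ Real.exp β * smoothSup g β a :=
        mul_le_mul_of_nonneg_left (le_ciSup hbdd ⟨ℓ + 1, by linarith⟩) (Real.exp_pos _).le

end SmoothSup

section SensBound

variable {kstar β C : ℝ}

lemma sensBound_monotoneOn (hkstar : 0 ≤ kstar) (hβ : 0 ≤ β) (hC : 0 ≤ C) :
    MonotoneOn (sensBound kstar β C) (Set.Ici 0) := by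
  intro a ha b hb hab
  rw [Set.mem_Ici] at ha hb
  unfold sensBound
  gcongr

/-- Uses `e^x ≥ 1 + x + x²/2` against the quadratic `ℓ ↦ g(a + ℓ)`. -/
lemma bddAbove_sensBound (hkstar : 0 ≤ kstar) (hβ : 0 < β) (hC : 0 ≤ C) {a : ℝ}
    (ha : 0 ≤ a) :
    BddAbove (Set.range fun ℓ : {x : ℝ // 0 ≤ x} =>
      Real.exp (-β * ℓ) * sensBound kstar β C (a + ℓ)) := by
  set c₁ := C * (1 + β * (2 * a + kstar))
  set M := sensBound kstar β C a + c₁ / β + 2 * (C * β) / β ^ 2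
  refine ⟨M, ?_⟩
  rintro _ ⟨⟨ℓ, hℓ⟩, rfl⟩
  have hexp := Real.quadratic_le_exp_of_nonneg (mul_nonneg hβ.le hℓ)
  have hg₀ : 0 ≤ sensBound kstar β C a := by unfold sensBound; positivity
  have hM₁ : c₁ ≤ M * β := by
    have : c₁ / β ≤ M := by linarith [show 0 ≤ 2 * (C * β) / β ^ 2 by positivity]
    rwa [div_le_iff₀ hβ] at this
  have hM₂ : 2 * (C * β) ≤ M * β ^ 2 := by
    have : 2 * (C * β) / β ^ 2 ≤ M := by linarith [show 0 ≤ c₁ / β by positivity]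
    rwa [div_le_iff₀ (by positivity)] at this
  have hquad : sensBound kstar β C (a + ℓ) ≤ M * Real.exp (β * ℓ) := by
    calc sensBound kstar β C (a + ℓ)
          = sensBound kstar β C a + c₁ * ℓ + C * β * ℓ ^ 2 := by
          unfold sensBound; ring
      _ ≤ M * (1 + β * ℓ + (β * ℓ) ^ 2 / 2) := by
          have hM₀ : sensBound kstar β C a ≤ M := by
            linarith [show 0 ≤ c₁ / β by positivity,
              show 0 ≤ 2 * (C * β) / β ^ 2 by positivity]
          nlinarith [mul_le_mul_of_nonneg_right hM₁ hℓ,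
            mul_le_mul_of_nonneg_right hM₂ (sq_nonneg ℓ)]
      _ ≤ M * Real.exp (β * ℓ) := mul_le_mul_of_nonneg_left hexp (by positivity)
  calc Real.exp (-β * ℓ) * sensBound kstar β C (a + ℓ)
      ≤ Real.exp (-β * ℓ) * (M * Real.exp (β * ℓ)) :=
        mul_le_mul_of_nonneg_left hquad (Real.exp_pos _).le
    _ = M := by
        rw [mul_left_comm, ← Real.exp_add, neg_mul, neg_add_cancel, Real.exp_zero, mul_one]

end SensBound

lemma AgreeAwayFrom.abs_fEst_sub_le_sensBound {n : ℕ} {G G' : SimpleGraph (Fin n)} {i : Fin n}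
    (h : AgreeAwayFrom G G' i) (hn : 2 ≤ n) {kstar β : ℝ} (hkstar : 0 ≤ kstar) (hβ : 0 < β)
    (hβ₁ : β ≤ 1) :
    |fEst G kstar β - fEst G' kstar β| ≤ sensBound kstar β 200 (kOf G kstar) := by
  refine (h.abs_fEst_sub_le kstar hn hβ hkstar).trans ?_
  have hk : (1 : ℝ) ≤ kOf G kstar := by exact_mod_cast (kOf_mem G kstar).1
  have hk' : (kOf G' kstar : ℝ) ≤ kOf G kstar + 1 := by
    exact_mod_cast h.kOf_le_kOf_add_one kstar
  have hk'₀ : (0 : ℝ) ≤ kOf G' kstar := Nat.cast_nonneg _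
  have hβinv : 1 ≤ 1 / β := by rw [le_div_iff₀ hβ]; linarith
  have h2β : 2 / β = 2 * (1 / β) := by ring
  unfold sensBound
  set k : ℝ := (kOf G kstar : ℝ)
  set k' : ℝ := (kOf G' kstar : ℝ)
  have hK : k + k' ≤ 3 * k := by linarith
  nlinarith [mul_le_mul_of_nonneg_left hK hβ.le, mul_nonneg hβ.le hkstar,
    mul_nonneg (mul_nonneg hβ.le hkstar) (by linarith : (0 : ℝ) ≤ 3 * k - (k + k')),
    mul_nonneg (mul_nonneg hβ.le (by linarith : (0 : ℝ) ≤ 3 * k - (k + k')))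
      (by linarith : (0 : ℝ) ≤ 3 * k + (k + k')),
    mul_nonneg (by linarith : (0 : ℝ) ≤ 1 - β) (by linarith : (0 : ℝ) ≤ k + k')]

/-- `S(G) = sup_{ℓ ≥ 0} e^{-βℓ} g(k_G + ℓ)` is a `β`-smooth upper
bound on the local sensitivity of `f`. -/
theorem smoothS_is_smooth_upper_bound :
    ∃ C : ℝ, 0 < C ∧
      ∀ n : ℕ, 2 ≤ n → ∀ kstar : ℝ, 0 ≤ kstar → ∀ β : ℝ, 0 < β → β ≤ 1 →
        (∀ G G' : SimpleGraph (Fin n), NodeAdjacent G G' →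
          |fEst G kstar β - fEst G' kstar β| ≤ smoothS G kstar β C) ∧
        (∀ G G' : SimpleGraph (Fin n), NodeAdjacent G G' →
          smoothS G' kstar β C ≤ Real.exp β * smoothS G kstar β C) := by
  refine ⟨200, by norm_num, fun n hn kstar hkstar β hβ hβ₁ => ⟨fun G G' hGG' => ?_,
    fun G G' hGG' => ?_⟩⟩
  all_goals
    obtain ⟨i, h⟩ := hGG'.exists_agreeAwayFrom
    have hbdd := bddAbove_sensBound hkstar hβ (by norm_num : (0 : ℝ) ≤ 200)
      (Nat.cast_nonneg (kOf G kstar))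
    simp only [smoothS_eq_smoothSup]
  · exact (h.abs_fEst_sub_le_sensBound hn hkstar hβ hβ₁).trans (le_smoothSup hbdd)
  · exact smoothSup_le_exp_mul_smoothSup (sensBound_monotoneOn hkstar hβ.le (by norm_num))
      (Nat.cast_nonneg _) (by exact_mod_cast h.kOf_le_kOf_add_one kstar) hbdd

end
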